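/- Let a, b, x, χ be complex numbers with b not a nonpositive integer. Then ₁F₁(a;b; x + χ) = Σ_{ℓ=0}^∞ ((a)_ℓ / (ℓ! (b)_ℓ)) ₁F₁(a+ℓ; b+ℓ; x) χ^ℓ, the series converging for all χ ∈ ℂ. -/

import Mathlib

open Complex

/-- Pochhammer symbol `(q)_n = q (q+1) ⋯ (q+n-1)`. -/
noncomputable def poch (q : ℂ) (n : ℕ) : ℂ := (ascPochhammer ℂ n).eval q

/-- Confluent hypergeometric function `₁F₁(a; b; x) = ∑ₛ (a)ₛ xˢ / (s! (b)ₛ)`. -/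
noncomputable def oneF1 (a b x : ℂ) : ℂ :=
  ∑' s : ℕ, poch a s * x ^ s / ((s.factorial : ℂ) * poch b s)

lemma poch_zero (q : ℂ) : poch q 0 = 1 := by simp [poch]

lemma poch_succ (q : ℂ) (n : ℕ) : poch q (n + 1) = poch q n * (q + n) := by
  simp [poch, ascPochhammer_succ_right]

lemma poch_add (q : ℂ) (n m : ℕ) : poch q (n + m) = poch q n * poch (q + n) m := by
  rw [poch, ← ascPochhammer_mul]
  simp [poch, Polynomial.eval_comp]

lemma poch_ne_zero {b : ℂ} (hb : ∀ n : ℕ, b ≠ -(n : ℂ)) (s : ℕ) : poch b s ≠ 0 := by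
  induction s with
  | zero => simp [poch_zero]
  | succ n ih =>
    rw [poch_succ]
    refine mul_ne_zero ih fun h => hb n ?_
    linear_combination h

lemma poch_bound (a b : ℂ) (hb : ∀ n : ℕ, b ≠ -(n : ℂ)) :
    ∃ K : ℝ, 1 ≤ K ∧ ∀ s : ℕ, ‖poch a s‖ ≤ K ^ s * ‖poch b s‖ := by
  have hbk : ∀ k : ℕ, b + k ≠ 0 := by
    intro k h
    exact hb k (by linear_combination h)
  have hnorm : Filter.Tendsto (fun k : ℕ => ‖b + k‖) Filter.atTop Filter.atTop := by
    apply Filter.tendsto_atTop_mono (f := fun k : ℕ => (k : ℝ) - ‖b‖)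
    · intro k
      calc (k : ℝ) - ‖b‖ = ‖(k : ℂ)‖ - ‖b‖ := by simp
        _ ≤ ‖b + k‖ := by
            have h : ‖(b + (k : ℂ)) - b‖ ≤ ‖b + k‖ + ‖b‖ := norm_sub_le _ _
            rw [add_sub_cancel_left] at h
            linarith
    · exact Filter.tendsto_atTop_add_const_right _ _ tendsto_natCast_atTop_atTop
  have h0 : Filter.Tendsto (fun k : ℕ => (a - b) / (b + k)) Filter.atTop (nhds 0) := by
    rw [tendsto_zero_iff_norm_tendsto_zero]
    simp only [norm_div]
    exact Filter.Tendsto.div_atTop tendsto_const_nhds hnorm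
  have htend : Filter.Tendsto (fun k : ℕ => ‖a + k‖ / ‖b + k‖) Filter.atTop (nhds 1) := by
    have h1 : Filter.Tendsto (fun k : ℕ => (1 : ℂ) + (a - b) / (b + k)) Filter.atTop (nhds 1) := by
      have := (tendsto_const_nhds (x := (1:ℂ)) (f := Filter.atTop)).add h0
      rwa [add_zero] at this
    have h2 : Filter.Tendsto (fun k : ℕ => ‖(1 : ℂ) + (a - b) / (b + k)‖) Filter.atTop
        (nhds 1) := by simpa using h1.norm
    refine h2.congr fun k => ?_
    rw [← norm_div]
    congr 1
    have hsub : a + (k : ℂ) - (b + k) = a - b := by ring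
    rw [eq_comm, ← sub_eq_iff_eq_add', div_sub_one (hbk k), hsub]
  obtain ⟨K₀, hK₀⟩ := htend.bddAbove_range
  refine ⟨max K₀ 1, le_max_right _ _, ?_⟩
  have hak : ∀ k : ℕ, ‖a + k‖ ≤ max K₀ 1 * ‖b + k‖ := by
    intro k
    have h1 : ‖a + k‖ / ‖b + k‖ ≤ K₀ := hK₀ ⟨k, rfl⟩
    have h2 : (0:ℝ) < ‖b + k‖ := norm_pos_iff.2 (hbk k)
    calc ‖a + k‖ = ‖a + k‖ / ‖b + k‖ * ‖b + k‖ := by rw [div_mul_cancel₀ _ h2.ne']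
      _ ≤ max K₀ 1 * ‖b + k‖ :=
          mul_le_mul_of_nonneg_right (h1.trans (le_max_left _ _)) h2.le
  intro s
  induction s with
  | zero => simp [poch_zero]
  | succ n ih =>
    rw [poch_succ, poch_succ, norm_mul, norm_mul, pow_succ]
    calc ‖poch a n‖ * ‖a + n‖ ≤ (max K₀ 1 ^ n * ‖poch b n‖) * (max K₀ 1 * ‖b + n‖) :=
          mul_le_mul ih (hak n) (norm_nonneg _) (by positivity)
      _ = max K₀ 1 ^ n * max K₀ 1 * (‖poch b n‖ * ‖b + n‖) := by ring

theorem stmt7 (a b x χ : ℂ) (hb : ∀ n : ℕ, b ≠ -(n : ℂ)) :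
    HasSum (fun ℓ : ℕ => poch a ℓ / ((ℓ.factorial : ℂ) * poch b ℓ) * oneF1 (a + ℓ) (b + ℓ) x * χ ^ ℓ)
      (oneF1 a b (x + χ)) := by
  obtain ⟨K, hK1, hK⟩ := poch_bound a b hb
  have hK0 : (0:ℝ) < K := lt_of_lt_of_le one_pos hK1
  set f : ℕ × ℕ → ℂ := fun p =>
    poch a (p.1 + p.2) * x ^ p.2 * χ ^ p.1 /
      ((p.1.factorial : ℂ) * (p.2.factorial : ℂ) * poch b (p.1 + p.2)) with hf
  -- summability of the double series
  have hg : Summable fun p : ℕ × ℕ =>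
      ((K * ‖χ‖) ^ p.1 / p.1.factorial) * ((K * ‖x‖) ^ p.2 / p.2.factorial) := by
    apply Summable.mul_of_nonneg (Real.summable_pow_div_factorial _)
      (Real.summable_pow_div_factorial _)
    · intro n; positivity
    · intro n; positivity
  have hfb : ∀ p : ℕ × ℕ, ‖f p‖ ≤
      ((K * ‖χ‖) ^ p.1 / p.1.factorial) * ((K * ‖x‖) ^ p.2 / p.2.factorial) := by
    rintro ⟨l, m⟩
    have hbn : poch b (l + m) ≠ 0 := poch_ne_zero hb _
    have hbpos : (0:ℝ) < ‖poch b (l + m)‖ := norm_pos_iff.2 hbn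
    have hl : (0:ℝ) < l.factorial := by exact_mod_cast l.factorial_pos
    have hm : (0:ℝ) < m.factorial := by exact_mod_cast m.factorial_pos
    simp only [hf, norm_div, norm_mul, norm_pow, norm_natCast]
    rw [div_le_iff₀ (by positivity)]
    calc ‖poch a (l + m)‖ * ‖x‖ ^ m * ‖χ‖ ^ l
        ≤ (K ^ (l + m) * ‖poch b (l + m)‖) * ‖x‖ ^ m * ‖χ‖ ^ l :=
          mul_le_mul_of_nonneg_right
            (mul_le_mul_of_nonneg_right (hK (l + m)) (by positivity)) (by positivity)
      _ = (K * ‖χ‖) ^ l / l.factorial * ((K * ‖x‖) ^ m / m.factorial) *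
            ((l.factorial : ℝ) * (m.factorial : ℝ) * ‖poch b (l + m)‖) := by
          rw [pow_add]
          field_simp
          ring
  have hsum : Summable f := Summable.of_norm_bounded hg hfb
  set S : ℂ := ∑' p, f p with hSdef
  have hS : HasSum f S := hsum.hasSum
  -- diagonal grouping: S is the 1F1 series at x + χ
  have key : ∀ n : ℕ, ∑ p ∈ Finset.HasAntidiagonal.antidiagonal n, f p =
      poch a n * (x + χ) ^ n / ((n.factorial : ℂ) * poch b n) := by
    intro n
    rw [Finset.Nat.sum_antidiagonal_eq_sum_range_succ_mk]
    have hxp : (x + χ) ^ n = ∑ k ∈ Finset.range (n + 1),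
        χ ^ k * x ^ (n - k) * (n.choose k : ℂ) := by
      rw [add_comm x χ, add_pow]
    rw [hxp, Finset.mul_sum, Finset.sum_div]
    refine Finset.sum_congr rfl fun k hk => ?_
    have hkn : k ≤ n := Nat.lt_succ_iff.mp (Finset.mem_range.mp hk)
    have hadd : k + (n - k) = n := Nat.add_sub_cancel' hkn
    have hnf : ((n.factorial : ℂ)) = (n.choose k : ℂ) * (k.factorial : ℂ) *
        ((n - k).factorial : ℂ) := by
      exact_mod_cast (Nat.choose_mul_factorial_mul_factorial hkn).symm
    have h1 : (k.factorial : ℂ) ≠ 0 := Nat.cast_ne_zero.2 k.factorial_ne_zero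
    have h2 : ((n - k).factorial : ℂ) ≠ 0 := Nat.cast_ne_zero.2 (n - k).factorial_ne_zero
    have h3 : poch b n ≠ 0 := poch_ne_zero hb n
    have h4 : ((n.factorial : ℂ)) ≠ 0 := Nat.cast_ne_zero.2 n.factorial_ne_zero
    simp only [hf, hadd]
    rw [div_eq_div_iff (by exact mul_ne_zero (mul_ne_zero h1 h2) h3)
      (mul_ne_zero h4 h3)]
    linear_combination (poch a n * x ^ (n - k) * χ ^ k * poch b n) * hnf
  have hdiag : HasSum (fun n : ℕ => poch a n * (x + χ) ^ n /
      ((n.factorial : ℂ) * poch b n)) S := by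
    have hS' : HasSum (f ∘ Finset.HasAntidiagonal.sigmaAntidiagonalEquivProd) S :=
      (Equiv.hasSum_iff _).2 hS
    have := hS'.sigma (fun n : ℕ =>
      hasSum_fintype (fun p : Finset.HasAntidiagonal.antidiagonal n => f (p : ℕ × ℕ)))
    have e : ∀ n : ℕ, (∑ p : Finset.HasAntidiagonal.antidiagonal n, f (p : ℕ × ℕ)) =
        ∑ p ∈ Finset.HasAntidiagonal.antidiagonal n, f p := fun n => Finset.sum_coe_sort _ f
    simpa only [e, key] using this
  have hSeq : oneF1 a b (x + χ) = S := hdiag.tsum_eq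
  -- fiberwise sums
  have hfiber : ∀ l : ℕ, HasSum (fun m => f (l, m))
      (poch a l / ((l.factorial : ℂ) * poch b l) * oneF1 (a + l) (b + l) x * χ ^ l) := by
    intro l
    have hsl : Summable fun m => f (l, m) := hsum.prod_factor l
    have hptw : ∀ m : ℕ, f (l, m) =
        (poch a l / ((l.factorial : ℂ) * poch b l) * χ ^ l) *
          (poch (a + l) m * x ^ m / ((m.factorial : ℂ) * poch (b + l) m)) := by
      intro m
      simp only [hf, poch_add]
      ring
    have := hsl.hasSum
    rw [show (∑' m, f (l, m)) =
        poch a l / ((l.factorial : ℂ) * poch b l) * oneF1 (a + l) (b + l) x * χ ^ l from ?_] at this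
    · exact this
    · calc (∑' m, f (l, m)) = ∑' m, (poch a l / ((l.factorial : ℂ) * poch b l) * χ ^ l) *
            (poch (a + l) m * x ^ m / ((m.factorial : ℂ) * poch (b + l) m)) := by
            exact tsum_congr hptw
        _ = (poch a l / ((l.factorial : ℂ) * poch b l) * χ ^ l) * oneF1 (a + l) (b + l) x := by
            rw [tsum_mul_left]; rfl
        _ = poch a l / ((l.factorial : ℂ) * poch b l) * oneF1 (a + l) (b + l) x * χ ^ l := by
            ring
  rw [hSeq]
  exact hS.prod_fiberwise hfiber
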